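/- Let $M$ be a finite direct sum of matrix algebras with delta-form $\delta$, and let $H$ be a Hilbert-$M$-bimodule. Give $L^2(M)$ (i.e. $M$ with inner product $\langle x,y\rangle = \delta(y^*x)$) the bimodule structure $a \cdot [x] \cdot b = [a x \mu^{-1/2}(b)]$. Then the map $L^2(M) \otimes H \to H$, $[x] \otimes \xi \mapsto x \cdot \xi$, restricts to a unitary $M$-bimodular isomorphism $L^2(M) \boxtimes H \cong H$, where $\boxtimes$ is the relative tensor product. -/

import Mathlib

open Matrix ComplexOrder MulOpposite
open scoped TensorProduct

/-- The delta-form `δ(x) = ∑ i, d i · tr(x i * σ i)` as a linear functional on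
`M = ⨁ i, ℂ^{d i × d i}`. -/
noncomputable def deltaLPi {ι : Type} [Fintype ι] (d : ι → ℕ)
    (σ : ∀ i, Matrix (Fin (d i)) (Fin (d i)) ℂ) :
    (∀ i, Matrix (Fin (d i)) (Fin (d i)) ℂ) →ₗ[ℂ] ℂ :=
  ∑ i, (d i : ℂ) • ((Matrix.traceLinearMap (Fin (d i)) ℂ ℂ).comp
    ((LinearMap.mulRight ℂ (σ i)).comp
      (LinearMap.proj i : (∀ j, Matrix (Fin (d j)) (Fin (d j)) ℂ) →ₗ[ℂ] _)))

/-!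
In each block the matrix units `e_{kl}` and the elements `g_{kl} = (d σ)⁻¹ e_{lk}` are dual bases
of `M` for the pairing `(x, y) ↦ δ (x y)`, and `∑ e_{kl} g_{kl} = 1` is precisely the normalisation
`tr σ⁻¹ = d` of the delta-form. Since `δ (x μ^{-1/2}(c)) = δ (μ^{1/2}(c) x)`, the relation defining
`L²(M) ⊠ H` says that the slice map `δ ⊗ id` intertwines left multiplication by any `g` with the
action of `g` on `H`; expanding `u ∈ L²(M) ⊠ H` in the dual bases then gives
`u = ∑ e_k ⊗ g_k · (δ ⊗ id) u`. So `ξ ↦ ∑ e_k ⊗ g_k ξ` inverts the multiplication map on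
`L²(M) ⊠ H`, and it is isometric because `∑_{k,m} δ (e_m^* e_k) g_m^* g_k = ∑_k e_k g_k = 1`.
-/

section DualBasis

variable {R A K : Type*} [CommSemiring R] [Semiring A] [Algebra R A] [Fintype K]

structure IsDualBasis (φ : A →ₗ[R] R) (e g : K → A) : Prop where
  sum_smul_left : ∀ a, ∑ k, φ (g k * a) • e k = a
  sum_smul_right : ∀ a, ∑ k, φ (a * e k) • g k = a

lemma sum_comp_proj_single {ι : Type*} [Fintype ι] [DecidableEq ι] {B : ι → Type*}
    [∀ i, AddCommMonoid (B i)] [∀ i, Module R (B i)] (φ : ∀ i, B i →ₗ[R] R) (i : ι) (b : B i) :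
    (∑ j, (φ j).comp (LinearMap.proj j)) (Pi.single i b) = φ i b := by
  rw [LinearMap.sum_apply, Finset.sum_eq_single i (fun j _ hj => by simp [hj]) (by simp)]
  simp

theorem IsDualBasis.pi {ι : Type*} [Fintype ι] [DecidableEq ι] {B : ι → Type*}
    [∀ i, Semiring (B i)] [∀ i, Algebra R (B i)] {κ : ι → Type*} [∀ i, Fintype (κ i)]
    {φ : ∀ i, B i →ₗ[R] R} {e g : ∀ i, κ i → B i} (h : ∀ i, IsDualBasis (φ i) (e i) (g i)) :
    IsDualBasis (∑ i, (φ i).comp (LinearMap.proj i))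
      (fun k : Σ i, κ i => Pi.single k.1 (e k.1 k.2))
      (fun k : Σ i, κ i => Pi.single k.1 (g k.1 k.2)) where
  sum_smul_left a := by
    refine (Fintype.sum_sigma _).trans ((Finset.sum_congr rfl fun i _ => ?_).trans
      (Finset.univ_sum_single a))
    simp_rw [← Pi.single_mul_left, sum_comp_proj_single]
    simpa only [map_sum, map_smul, LinearMap.coe_single] using
      congrArg (LinearMap.single R B i) ((h i).sum_smul_left (a i))
  sum_smul_right a := by
    refine (Fintype.sum_sigma _).trans ((Finset.sum_congr rfl fun i _ => ?_).trans
      (Finset.univ_sum_single a))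
    simp_rw [← Pi.single_mul_right, sum_comp_proj_single]
    simpa only [map_sum, map_smul, LinearMap.coe_single] using
      congrArg (LinearMap.single R B i) ((h i).sum_smul_right (a i))

lemma sum_pi_single_mul_pi_single {ι : Type*} [Fintype ι] [DecidableEq ι] {B : ι → Type*}
    [∀ i, Semiring (B i)] {κ : ι → Type*} [∀ i, Fintype (κ i)]
    {e g : ∀ i, κ i → B i} (h : ∀ i, ∑ k, e i k * g i k = 1) :
    ∑ k : Σ i, κ i, Pi.single k.1 (e k.1 k.2) * Pi.single (M := B) k.1 (g k.1 k.2) = 1 := by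
  refine (Fintype.sum_sigma _).trans ((Finset.sum_congr rfl fun i _ => ?_).trans
    (Finset.univ_sum_single 1))
  simp_rw [← Pi.single_mul]
  simpa only [map_sum, AddMonoidHom.single_apply, Pi.one_apply] using
    congrArg (AddMonoidHom.single B i) (h i)

end DualBasis

section MatrixUnits

variable {n R : Type*} [Fintype n] [DecidableEq n] [CommRing R]

lemma Matrix.sum_single_mul_single_eq_trace_smul (M : Matrix n n R) :
    ∑ kl : n × n, single kl.1 kl.2 (1 : R) * M * single kl.2 kl.1 1 = M.trace • 1 := by
  simp only [Fintype.sum_prod_type, single_mul_mul_single, one_mul, mul_one]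
  rw [Finset.sum_comm]
  simp_rw [sum_single_eq_diagonal, ← smul_one_eq_diagonal, ← Finset.sum_smul]
  rfl

lemma Matrix.isDualBasis_trace_mul (ρ : Matrix n n R) (hρ : IsUnit ρ.det) :
    IsDualBasis ((traceLinearMap n R R).comp (LinearMap.mulRight R ρ))
      (fun kl : n × n => single kl.1 kl.2 1) (fun kl => ρ⁻¹ * single kl.2 kl.1 1) where
  sum_smul_left a := by
    have coeff : ∀ k l, (ρ⁻¹ * single l k 1 * a * ρ).trace = a k l := by
      intro k l
      rw [mul_assoc, mul_assoc, trace_mul_comm, mul_assoc, mul_assoc, mul_nonsing_inv _ hρ,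
        mul_one, trace_single_mul, one_smul]
    simp only [LinearMap.comp_apply, LinearMap.mulRight_apply, traceLinearMap_apply, coeff,
      Fintype.sum_prod_type, smul_single, smul_eq_mul, mul_one]
    exact (matrix_eq_sum_single a).symm
  sum_smul_right a := by
    have coeff : ∀ k l, (a * single k l 1 * ρ).trace = (ρ * a) l k := by
      intro k l
      rw [trace_mul_comm, ← mul_assoc, trace_mul_single, op_one, one_smul]
    simp only [LinearMap.comp_apply, LinearMap.mulRight_apply, traceLinearMap_apply, coeff,
      Fintype.sum_prod_type, ← mul_smul_comm, ← Finset.mul_sum, smul_single, smul_eq_mul, mul_one]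
    rw [Finset.sum_comm, ← matrix_eq_sum_single]
    exact nonsing_inv_mul_cancel_left _ _ hρ

end MatrixUnits

section StarAlgebra

variable {A K : Type*} [Ring A] [StarRing A] [Algebra ℂ A] [StarModule ℂ A] [Fintype K]
  {φ : A →ₗ[ℂ] ℂ} {e g : K → A}

theorem IsDualBasis.sum_sum_smul_star_mul (hD : IsDualBasis φ e g)
    (hφ : ∀ x, φ (star x) = star (φ x)) (hunit : ∑ k, e k * g k = 1) :
    ∑ k, ∑ m, φ (star (e m) * e k) • (star (g m) * g k) = 1 := by
  have hcol : ∀ k, ∑ m, φ (star (e m) * e k) • star (g m) = e k := fun k =>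
    calc ∑ m, φ (star (e m) * e k) • star (g m) = star (∑ m, φ (star (e k) * e m) • g m) := by
          simp only [star_sum, star_smul, ← hφ, star_mul, star_star]
      _ = e k := by rw [hD.sum_smul_right, star_star]
  simp_rw [← smul_mul_assoc, ← Finset.sum_mul, hcol, hunit]

end StarAlgebra

section RelativeTensorProduct

open TensorProduct

variable {A H K : Type*} [Ring A] [Algebra ℂ A] [Fintype K]
  [NormedAddCommGroup H] [InnerProductSpace ℂ H]
  {φ : A →ₗ[ℂ] ℂ} {e g : K → A}

variable (φ) in
noncomputable def sliceLeft : A ⊗[ℂ] H →ₗ[ℂ] H :=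
  TensorProduct.lid ℂ H ∘ₗ φ.rTensor H

@[simp] lemma sliceLeft_tmul (a : A) (ξ : H) : sliceLeft φ (a ⊗ₜ ξ) = φ a • ξ := rfl

lemma sliceLeft_map_id (L : H →ₗ[ℂ] H) (u : A ⊗[ℂ] H) :
    sliceLeft φ (TensorProduct.map LinearMap.id L u) = L (sliceLeft φ u) := by
  induction u using TensorProduct.induction_on with
  | zero => simp
  | tmul a ξ => simp
  | add u v hu hv => simp only [map_add, hu, hv]

lemma IsDualBasis.sum_tmul_sliceLeft (hD : IsDualBasis φ e g) (u : A ⊗[ℂ] H) :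
    ∑ k, e k ⊗ₜ sliceLeft φ (TensorProduct.map (LinearMap.mulLeft ℂ (g k)) LinearMap.id u) = u := by
  induction u using TensorProduct.induction_on with
  | zero => simp
  | tmul a ξ =>
    simp only [map_tmul, LinearMap.mulLeft_apply, LinearMap.id_coe, id_eq, sliceLeft_tmul,
      tmul_smul, smul_tmul', ← sum_tmul, hD.sum_smul_left]
  | add u v hu hv => simp only [map_add, tmul_add, Finset.sum_add_distrib, hu, hv]

lemma sliceLeft_map_mulRight {α β : A → A} (hKMS : ∀ x c, φ (x * α c) = φ (β c * x)) (c : A)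
    (u : A ⊗[ℂ] H) :
    sliceLeft φ (TensorProduct.map (LinearMap.mulRight ℂ (α c)) LinearMap.id u)
      = sliceLeft φ (TensorProduct.map (LinearMap.mulLeft ℂ (β c)) LinearMap.id u) := by
  induction u using TensorProduct.induction_on with
  | zero => simp
  | tmul a ξ => simp [hKMS]
  | add u v hu hv => simp only [map_add, hu, hv]

variable [StarRing A] [CompleteSpace H] {lam : A →⋆ₐ[ℂ] (H →L[ℂ] H)} {α β : A → A}

variable (lam) in
noncomputable def actionMap : A ⊗[ℂ] H →ₗ[ℂ] H :=
  TensorProduct.lift ((ContinuousLinearMap.coeLM ℂ).comp lam.toAlgHom.toLinearMap)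

-- With `α = μ^{-1/2}` and `β = μ^{1/2}` this is the relative tensor product `L²(M) ⊠ H`.
variable (lam α β) in
noncomputable def relTensor : Submodule ℂ (A ⊗[ℂ] H) :=
  ⨅ x, LinearMap.ker (TensorProduct.map (LinearMap.mulRight ℂ (α x)) LinearMap.id
    - TensorProduct.map LinearMap.id (lam (β x)).toLinearMap)

variable (e g lam) in
noncomputable def dualBasisEmbedding (ξ : H) : A ⊗[ℂ] H :=
  ∑ k, e k ⊗ₜ lam (g k) ξ

@[simp] lemma actionMap_tmul (a : A) (ξ : H) : actionMap lam (a ⊗ₜ ξ) = lam a ξ := rfl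

lemma actionMap_map_mulLeft (a : A) (u : A ⊗[ℂ] H) :
    actionMap lam (TensorProduct.map (LinearMap.mulLeft ℂ a) LinearMap.id u)
      = lam a (actionMap lam u) := by
  induction u using TensorProduct.induction_on with
  | zero => simp
  | tmul x ξ => simp
  | add u v hu hv => simp only [map_add, hu, hv]

lemma actionMap_map_id_of_commute (L : H →L[ℂ] H) (hL : ∀ a, Commute (lam a) L)
    (u : A ⊗[ℂ] H) :
    actionMap lam (TensorProduct.map LinearMap.id L.toLinearMap u) = L (actionMap lam u) := by
  induction u using TensorProduct.induction_on with
  | zero => simp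
  | tmul x ξ => simpa using congrArg (· ξ) (hL x).eq
  | add u v hu hv => simp only [map_add, hu, hv]

lemma mem_relTensor_iff (u : A ⊗[ℂ] H) : u ∈ relTensor lam α β ↔
    ∀ x, TensorProduct.map (LinearMap.mulRight ℂ (α x)) LinearMap.id u
      = TensorProduct.map LinearMap.id (lam (β x)).toLinearMap u := by
  simp only [relTensor, Submodule.mem_iInf, LinearMap.mem_ker, LinearMap.sub_apply, sub_eq_zero]

lemma sliceLeft_map_mulLeft_of_mem (hKMS : ∀ x c, φ (x * α c) = φ (β c * x))
    (hβ : Function.Surjective β) {u : A ⊗[ℂ] H} (hu : u ∈ relTensor lam α β) (b : A) :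
    sliceLeft φ (TensorProduct.map (LinearMap.mulLeft ℂ b) LinearMap.id u)
      = lam b (sliceLeft φ u) := by
  obtain ⟨c, rfl⟩ := hβ b
  rw [← sliceLeft_map_mulRight hKMS, (mem_relTensor_iff u).1 hu c, sliceLeft_map_id]
  rfl

lemma dualBasisEmbedding_sliceLeft_of_mem (hD : IsDualBasis φ e g)
    (hKMS : ∀ x c, φ (x * α c) = φ (β c * x)) (hβ : Function.Surjective β)
    {u : A ⊗[ℂ] H} (hu : u ∈ relTensor lam α β) :
    dualBasisEmbedding e g lam (sliceLeft φ u) = u := by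
  conv_rhs => rw [← hD.sum_tmul_sliceLeft u]
  simp only [dualBasisEmbedding, sliceLeft_map_mulLeft_of_mem hKMS hβ hu]

lemma actionMap_dualBasisEmbedding (hunit : ∑ k, e k * g k = 1) (ξ : H) :
    actionMap lam (dualBasisEmbedding e g lam ξ) = ξ := by
  rw [dualBasisEmbedding, map_sum]
  simp only [actionMap_tmul, ← mul_apply_eq_comp, ← map_mul, ← _root_.sum_apply, ← map_sum, hunit,
    map_one, one_apply_eq_self]

lemma dualBasisEmbedding_mem_relTensor (hD : IsDualBasis φ e g)
    (hKMS : ∀ x c, φ (x * α c) = φ (β c * x)) (ξ : H) :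
    dualBasisEmbedding e g lam ξ ∈ relTensor lam α β := by
  refine (mem_relTensor_iff _).2 fun x => ?_
  have hexpand : ∀ k, e k * α x = ∑ m, φ (β x * g m * e k) • e m := fun k => by
    conv_lhs => rw [← hD.sum_smul_left (e k * α x)]
    simp_rw [← mul_assoc, hKMS, ← mul_assoc]
  calc TensorProduct.map (LinearMap.mulRight ℂ (α x)) LinearMap.id (dualBasisEmbedding e g lam ξ)
      = ∑ m, e m ⊗ₜ lam (∑ k, φ (β x * g m * e k) • g k) ξ := by
        simp only [dualBasisEmbedding, map_sum, map_tmul, LinearMap.mulRight_apply, hexpand,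
          sum_tmul, LinearMap.id_coe, id_eq, map_sum, map_smul, _root_.sum_apply,
          _root_.smul_apply, tmul_sum, smul_tmul]
        exact Finset.sum_comm
    _ = _ := by
        simp only [hD.sum_smul_right, dualBasisEmbedding, map_sum, map_tmul, LinearMap.id_coe,
          id_eq, ContinuousLinearMap.coe_coe, map_mul, mul_apply_eq_comp]

lemma actionMap_eq_sliceLeft_of_mem (hD : IsDualBasis φ e g) (hunit : ∑ k, e k * g k = 1)
    (hKMS : ∀ x c, φ (x * α c) = φ (β c * x)) (hβ : Function.Surjective β)
    {u : A ⊗[ℂ] H} (hu : u ∈ relTensor lam α β) : actionMap lam u = sliceLeft φ u := by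
  conv_lhs => rw [← dualBasisEmbedding_sliceLeft_of_mem hD hKMS hβ hu]
  exact actionMap_dualBasisEmbedding hunit _

theorem bijective_actionMap_domRestrict_relTensor (hD : IsDualBasis φ e g)
    (hunit : ∑ k, e k * g k = 1) (hKMS : ∀ x c, φ (x * α c) = φ (β c * x))
    (hβ : Function.Surjective β) :
    Function.Bijective ((actionMap lam).domRestrict (relTensor lam α β)) := by
  refine ⟨fun u v huv => Subtype.ext ?_, fun ξ =>
    ⟨⟨_, dualBasisEmbedding_mem_relTensor hD hKMS ξ⟩, actionMap_dualBasisEmbedding hunit ξ⟩⟩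
  have hslice : sliceLeft φ (u : A ⊗[ℂ] H) = sliceLeft φ v := by
    rw [← actionMap_eq_sliceLeft_of_mem hD hunit hKMS hβ u.2,
      ← actionMap_eq_sliceLeft_of_mem hD hunit hKMS hβ v.2]
    exact huv
  rw [← dualBasisEmbedding_sliceLeft_of_mem hD hKMS hβ u.2,
    ← dualBasisEmbedding_sliceLeft_of_mem hD hKMS hβ v.2, hslice]

lemma inner_map_apply_map_apply (a b : A) (ξ η : H) :
    inner ℂ (lam a ξ) (lam b η) = inner ℂ ξ (lam (star a * b) η) := by
  rw [map_mul, map_star, mul_apply_eq_comp, ContinuousLinearMap.star_eq_adjoint,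
    ContinuousLinearMap.adjoint_inner_right]

variable [StarModule ℂ A] {ip : A ⊗[ℂ] H → A ⊗[ℂ] H → ℂ}

lemma ip_dualBasisEmbedding (hip_lin : ∀ v, IsLinearMap ℂ (fun u => ip u v))
    (hip_add : ∀ u v w, ip u (v + w) = ip u v + ip u w)
    (hip_pure : ∀ (a c : A) (ξ η : H), ip (a ⊗ₜ ξ) (c ⊗ₜ η) = φ (star c * a) * inner ℂ η ξ)
    (hD : IsDualBasis φ e g) (hφ : ∀ x, φ (star x) = star (φ x))
    (hunit : ∑ k, e k * g k = 1) (ξ η : H) :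
    ip (dualBasisEmbedding e g lam η) (dualBasisEmbedding e g lam ξ) = inner ℂ ξ η := by
  have sum_left : ∀ (f : K → A ⊗[ℂ] H) w, ip (∑ k, f k) w = ∑ k, ip (f k) w := fun f w =>
    map_sum (IsLinearMap.mk' _ (hip_lin w)) f _
  have sum_right : ∀ (f : K → A ⊗[ℂ] H) w, ip w (∑ k, f k) = ∑ k, ip w (f k) := fun f w =>
    map_sum (AddMonoidHom.mk' (ip w) (hip_add w)) f _
  calc ip (dualBasisEmbedding e g lam η) (dualBasisEmbedding e g lam ξ)
      = ∑ k, ∑ m, inner ℂ ξ (lam (φ (star (e m) * e k) • (star (g m) * g k)) η) := by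
        simp only [dualBasisEmbedding, sum_left, sum_right, hip_pure, inner_map_apply_map_apply,
          map_smul, _root_.smul_apply, inner_smul_right]
    _ = inner ℂ ξ η := by
        simp only [← inner_sum, ← _root_.sum_apply, ← map_sum, hD.sum_sum_smul_star_mul hφ hunit,
          map_one, one_apply_eq_self]

theorem inner_actionMap_of_mem (hip_lin : ∀ v, IsLinearMap ℂ (fun u => ip u v))
    (hip_add : ∀ u v w, ip u (v + w) = ip u v + ip u w)
    (hip_pure : ∀ (a c : A) (ξ η : H), ip (a ⊗ₜ ξ) (c ⊗ₜ η) = φ (star c * a) * inner ℂ η ξ)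
    (hD : IsDualBasis φ e g) (hφ : ∀ x, φ (star x) = star (φ x))
    (hunit : ∑ k, e k * g k = 1) (hKMS : ∀ x c, φ (x * α c) = φ (β c * x))
    (hβ : Function.Surjective β) {u v : A ⊗[ℂ] H} (hu : u ∈ relTensor lam α β)
    (hv : v ∈ relTensor lam α β) :
    inner ℂ (actionMap lam u) (actionMap lam v) = ip v u := by
  rw [actionMap_eq_sliceLeft_of_mem hD hunit hKMS hβ hu,
    actionMap_eq_sliceLeft_of_mem hD hunit hKMS hβ hv,
    ← ip_dualBasisEmbedding hip_lin hip_add hip_pure hD hφ hunit,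
    dualBasisEmbedding_sliceLeft_of_mem hD hKMS hβ hu,
    dualBasisEmbedding_sliceLeft_of_mem hD hKMS hβ hv]

end RelativeTensorProduct

section DirectSumOfMatrices

namespace Matrix

variable {n : ℕ} {σ τ : Matrix (Fin n) (Fin n) ℂ}

lemma isUnit_det_natCast_smul (hσ : IsUnit σ.det) : IsUnit ((n : ℂ) • σ).det := by
  rcases Nat.eq_zero_or_pos n with rfl | hn
  · simp
  · rw [det_smul]
    exact (IsUnit.pow _ (isUnit_iff_ne_zero.2 (by exact_mod_cast hn.ne'))).mul hσ

lemma sum_single_mul_inv_natCast_smul_mul_single (hσ : IsUnit σ.det) (htr : σ⁻¹.trace = n) :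
    ∑ kl : Fin n × Fin n, single kl.1 kl.2 (1 : ℂ) * (((n : ℂ) • σ)⁻¹ * single kl.2 kl.1 1)
      = 1 := by
  rcases Nat.eq_zero_or_pos n with rfl | hn
  · exact Subsingleton.elim _ _
  have hn' : (n : ℂ) ≠ 0 := by exact_mod_cast hn.ne'
  let := invertibleOfNonzero hn'
  simp_rw [← mul_assoc]
  rw [sum_single_mul_single_eq_trace_smul, inv_smul σ _ hσ, invOf_eq_inv, trace_smul, htr,
    smul_eq_mul, inv_mul_cancel₀ hn', one_smul]

lemma trace_mul_conj_mul_sq (hτ : IsUnit τ.det) (x c : Matrix (Fin n) (Fin n) ℂ) :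
    (x * (τ * c * τ⁻¹) * (τ * τ)).trace = (τ⁻¹ * c * τ * x * (τ * τ)).trace := by
  have lhs : x * (τ * c * τ⁻¹) * (τ * τ) = x * (τ * (c * τ)) := by
    simp only [mul_assoc, nonsing_inv_mul_cancel_left _ _ hτ]
  have rhs : τ⁻¹ * c * τ * x * (τ * τ) = τ⁻¹ * (c * τ * (x * τ) * τ) := by
    simp only [mul_assoc]
  rw [lhs, rhs, trace_mul_comm τ⁻¹, mul_nonsing_inv_cancel_right _ _ hτ, ← mul_assoc,
    trace_mul_comm]

end Matrix

variable {ι : Type} [Fintype ι] {d : ι → ℕ} {σ : ∀ i, Matrix (Fin (d i)) (Fin (d i)) ℂ}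

lemma deltaLPi_apply (a : ∀ i, Matrix (Fin (d i)) (Fin (d i)) ℂ) :
    deltaLPi d σ a = ∑ i, (d i : ℂ) * (a i * σ i).trace := by
  simp [deltaLPi, LinearMap.sum_apply]

lemma deltaLPi_eq_sum_comp_proj : deltaLPi d σ = ∑ i, ((traceLinearMap (Fin (d i)) ℂ ℂ).comp
    (LinearMap.mulRight ℂ ((d i : ℂ) • σ i))).comp (LinearMap.proj i) :=
  LinearMap.ext fun a => by simp [deltaLPi_apply, LinearMap.sum_apply]

lemma deltaLPi_star (hσ : ∀ i, (σ i).IsHermitian) (x : ∀ i, Matrix (Fin (d i)) (Fin (d i)) ℂ) :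
    deltaLPi d σ (star x) = star (deltaLPi d σ x) := by
  simp only [deltaLPi_apply, star_sum, star_mul', Complex.star_def, Complex.conj_natCast]
  refine Finset.sum_congr rfl fun i _ => ?_
  rw [← Complex.star_def, ← trace_conjTranspose, conjTranspose_mul, (hσ i).eq, trace_mul_comm]
  rfl

lemma deltaLPi_mul_conj {τ : ∀ i, Matrix (Fin (d i)) (Fin (d i)) ℂ} (hττ : ∀ i, τ i * τ i = σ i)
    (hτ : ∀ i, IsUnit (τ i).det) (x c : ∀ i, Matrix (Fin (d i)) (Fin (d i)) ℂ) :
    deltaLPi d σ (x * fun i => τ i * c i * (τ i)⁻¹)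
      = deltaLPi d σ ((fun i => (τ i)⁻¹ * c i * τ i) * x) := by
  simp only [deltaLPi_apply, Pi.mul_apply, ← hττ, Matrix.trace_mul_conj_mul_sq (hτ _)]

theorem isDualBasis_deltaLPi [DecidableEq ι] (hσ : ∀ i, IsUnit (σ i).det) :
    IsDualBasis (deltaLPi d σ)
      (fun k : Σ i, Fin (d i) × Fin (d i) => Pi.single k.1 (single k.2.1 k.2.2 1))
      (fun k => Pi.single k.1 (((d k.1 : ℂ) • σ k.1)⁻¹ * single k.2.2 k.2.1 1)) := by
  rw [deltaLPi_eq_sum_comp_proj]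
  exact IsDualBasis.pi fun i => isDualBasis_trace_mul _ (isUnit_det_natCast_smul (hσ i))

end DirectSumOfMatrices

theorem stmt10_general {ι : Type} [Fintype ι] (d : ι → ℕ)
    (σ τ : ∀ i, Matrix (Fin (d i)) (Fin (d i)) ℂ)
    (hσ : ∀ i, (σ i).PosDef) (htr : ∀ i, ((σ i)⁻¹).trace = (d i : ℂ))
    (hττ : ∀ i, τ i * τ i = σ i)
    {H : Type*} [NormedAddCommGroup H] [InnerProductSpace ℂ H] [CompleteSpace H]
    (lamH : (∀ i, Matrix (Fin (d i)) (Fin (d i)) ℂ) →⋆ₐ[ℂ] (H →L[ℂ] H))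
    (rhoH : (∀ i, Matrix (Fin (d i)) (Fin (d i)) ℂ)ᵐᵒᵖ →⋆ₐ[ℂ] (H →L[ℂ] H))
    (hHcomm : ∀ x y, Commute (lamH x) (rhoH y))
    (μhalf μneghalf : (∀ i, Matrix (Fin (d i)) (Fin (d i)) ℂ) →
      (∀ i, Matrix (Fin (d i)) (Fin (d i)) ℂ))
    (hμhalf : ∀ x i, μhalf x i = (τ i)⁻¹ * x i * τ i)
    (hμneghalf : ∀ x i, μneghalf x i = τ i * x i * (τ i)⁻¹)
    -- the relative tensor product `L²(M) ⊠ H` inside `L²(M) ⊗ H`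
    (S : Submodule ℂ ((∀ i, Matrix (Fin (d i)) (Fin (d i)) ℂ) ⊗[ℂ] H))
    (hS : S = ⨅ x : ∀ i, Matrix (Fin (d i)) (Fin (d i)) ℂ,
      LinearMap.ker (TensorProduct.map (LinearMap.mulRight ℂ (μneghalf x)) LinearMap.id
        - TensorProduct.map LinearMap.id (lamH (μhalf x)).toLinearMap))
    -- the map `x ⊗ ξ ↦ x · ξ`
    (T : ((∀ i, Matrix (Fin (d i)) (Fin (d i)) ℂ) ⊗[ℂ] H) →ₗ[ℂ] H)
    (hT : T = TensorProduct.lift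
      ((ContinuousLinearMap.coeLM ℂ).comp lamH.toAlgHom.toLinearMap))
    -- the tensor product inner product on `L²(M) ⊗ H`
    (ip : ((∀ i, Matrix (Fin (d i)) (Fin (d i)) ℂ) ⊗[ℂ] H) →
      ((∀ i, Matrix (Fin (d i)) (Fin (d i)) ℂ) ⊗[ℂ] H) → ℂ)
    (hip_lin : ∀ v, IsLinearMap ℂ (fun u => ip u v))
    (hip_add : ∀ u v w, ip u (v + w) = ip u v + ip u w)
    (hip_pure : ∀ (a c : ∀ i, Matrix (Fin (d i)) (Fin (d i)) ℂ) (ξ η : H),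
      ip (a ⊗ₜ[ℂ] ξ) (c ⊗ₜ[ℂ] η) = deltaLPi d σ (star c * a) * (inner ℂ η ξ : ℂ)) :
    -- `T` is `M`-bimodular for the bimodule structures involved
    (∀ (a : ∀ i, Matrix (Fin (d i)) (Fin (d i)) ℂ)
        (u : (∀ i, Matrix (Fin (d i)) (Fin (d i)) ℂ) ⊗[ℂ] H),
      T (TensorProduct.map (LinearMap.mulLeft ℂ a) LinearMap.id u) = lamH a (T u)) ∧
    (∀ (x : (∀ i, Matrix (Fin (d i)) (Fin (d i)) ℂ)ᵐᵒᵖ)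
        (u : (∀ i, Matrix (Fin (d i)) (Fin (d i)) ℂ) ⊗[ℂ] H),
      T (TensorProduct.map LinearMap.id (rhoH x).toLinearMap u) = rhoH x (T u)) ∧
    -- the restriction of `T` to `S` is bijective onto `H`
    Function.Bijective (T.domRestrict S) ∧
    -- and it is isometric: `⟪T u, T v⟫ = ⟪u, v⟫` for `u, v ∈ S`
    (∀ u v : (∀ i, Matrix (Fin (d i)) (Fin (d i)) ℂ) ⊗[ℂ] H,
      u ∈ S → v ∈ S → (inner ℂ (T u) (T v) : ℂ) = ip v u) := by
  classical
  obtain rfl : μhalf = fun x i => (τ i)⁻¹ * x i * τ i := funext fun x => funext (hμhalf x)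
  obtain rfl : μneghalf = fun x i => τ i * x i * (τ i)⁻¹ := funext fun x => funext (hμneghalf x)
  obtain rfl : T = actionMap lamH := hT
  obtain rfl : S = relTensor lamH _ _ := hS
  have hσu : ∀ i, IsUnit (σ i).det := fun i => (isUnit_iff_isUnit_det _).1 (hσ i).isUnit
  have hτu : ∀ i, IsUnit (τ i).det := fun i =>
    isUnit_of_mul_isUnit_left (by rw [← det_mul, hττ]; exact hσu i)
  have hD := isDualBasis_deltaLPi hσu
  have hunit := sum_pi_single_mul_pi_single fun i =>
    sum_single_mul_inv_natCast_smul_mul_single (hσu i) (htr i)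
  have hKMS := deltaLPi_mul_conj hττ hτu
  have hsurj : Function.Surjective fun (x : ∀ i, Matrix (Fin (d i)) (Fin (d i)) ℂ) i =>
      (τ i)⁻¹ * x i * τ i := fun y =>
    ⟨fun i => τ i * y i * (τ i)⁻¹, funext fun i => by
      simp only [mul_assoc, nonsing_inv_mul_cancel_left _ _ (hτu i),
        nonsing_inv_mul _ (hτu i), mul_one]⟩
  exact ⟨actionMap_map_mulLeft, fun x => actionMap_map_id_of_commute _ (hHcomm · x),
    bijective_actionMap_domRestrict_relTensor hD hunit hKMS hsurj,
    fun u v => inner_actionMap_of_mem hip_lin hip_add hip_pure hD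
      (deltaLPi_star fun i => (hσ i).isHermitian) hunit hKMS hsurj⟩

/-- `L²(M)` is `M` with inner product `⟨x,y⟩ = δ(y^* x)` and
bimodule structure `a · x · b = a x μ^{-1/2}(b)`.  The multiplication map
`L²(M) ⊗ H → H`, `x ⊗ ξ ↦ x · ξ`, restricted to the relative tensor product
`L²(M) ⊠ H` (the joint kernel condition below) is a unitary `M`-bimodular
isomorphism onto `H`. -/
theorem stmt10 {ι : Type} [Fintype ι] (d : ι → ℕ) (hd : ∀ i, 0 < d i)
    (σ τ : ∀ i, Matrix (Fin (d i)) (Fin (d i)) ℂ)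
    (hσ : ∀ i, (σ i).PosDef) (htr : ∀ i, ((σ i)⁻¹).trace = (d i : ℂ))
    (hτ : ∀ i, (τ i).PosDef) (hττ : ∀ i, τ i * τ i = σ i)
    {H : Type*} [NormedAddCommGroup H] [InnerProductSpace ℂ H] [CompleteSpace H]
    (lamH : (∀ i, Matrix (Fin (d i)) (Fin (d i)) ℂ) →⋆ₐ[ℂ] (H →L[ℂ] H))
    (rhoH : (∀ i, Matrix (Fin (d i)) (Fin (d i)) ℂ)ᵐᵒᵖ →⋆ₐ[ℂ] (H →L[ℂ] H))
    (hHcomm : ∀ x y, Commute (lamH x) (rhoH y))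
    (μhalf μneghalf : (∀ i, Matrix (Fin (d i)) (Fin (d i)) ℂ) →
      (∀ i, Matrix (Fin (d i)) (Fin (d i)) ℂ))
    (hμhalf : ∀ x i, μhalf x i = (τ i)⁻¹ * x i * τ i)
    (hμneghalf : ∀ x i, μneghalf x i = τ i * x i * (τ i)⁻¹)
    -- the relative tensor product `L²(M) ⊠ H` inside `L²(M) ⊗ H`
    (S : Submodule ℂ ((∀ i, Matrix (Fin (d i)) (Fin (d i)) ℂ) ⊗[ℂ] H))
    (hS : S = ⨅ x : ∀ i, Matrix (Fin (d i)) (Fin (d i)) ℂ,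
      LinearMap.ker (TensorProduct.map (LinearMap.mulRight ℂ (μneghalf x)) LinearMap.id
        - TensorProduct.map LinearMap.id (lamH (μhalf x)).toLinearMap))
    -- the map `x ⊗ ξ ↦ x · ξ`
    (T : ((∀ i, Matrix (Fin (d i)) (Fin (d i)) ℂ) ⊗[ℂ] H) →ₗ[ℂ] H)
    (hT : T = TensorProduct.lift
      ((ContinuousLinearMap.coeLM ℂ).comp lamH.toAlgHom.toLinearMap))
    -- the tensor product inner product on `L²(M) ⊗ H`
    (ip : ((∀ i, Matrix (Fin (d i)) (Fin (d i)) ℂ) ⊗[ℂ] H) →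
      ((∀ i, Matrix (Fin (d i)) (Fin (d i)) ℂ) ⊗[ℂ] H) → ℂ)
    (hip_lin : ∀ v, IsLinearMap ℂ (fun u => ip u v))
    (hip_add : ∀ u v w, ip u (v + w) = ip u v + ip u w)
    (hip_smul : ∀ (c : ℂ) u v, ip u (c • v) = (starRingEnd ℂ) c * ip u v)
    (hip_pure : ∀ (a c : ∀ i, Matrix (Fin (d i)) (Fin (d i)) ℂ) (ξ η : H),
      ip (a ⊗ₜ[ℂ] ξ) (c ⊗ₜ[ℂ] η) = deltaLPi d σ (star c * a) * (inner ℂ η ξ : ℂ)) :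
    -- `T` is `M`-bimodular for the bimodule structures involved
    (∀ (a : ∀ i, Matrix (Fin (d i)) (Fin (d i)) ℂ)
        (u : (∀ i, Matrix (Fin (d i)) (Fin (d i)) ℂ) ⊗[ℂ] H),
      T (TensorProduct.map (LinearMap.mulLeft ℂ a) LinearMap.id u) = lamH a (T u)) ∧
    (∀ (x : (∀ i, Matrix (Fin (d i)) (Fin (d i)) ℂ)ᵐᵒᵖ)
        (u : (∀ i, Matrix (Fin (d i)) (Fin (d i)) ℂ) ⊗[ℂ] H),
      T (TensorProduct.map LinearMap.id (rhoH x).toLinearMap u) = rhoH x (T u)) ∧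
    -- the restriction of `T` to `S` is bijective onto `H`
    Function.Bijective (T.domRestrict S) ∧
    -- and it is isometric: `⟪T u, T v⟫ = ⟪u, v⟫` for `u, v ∈ S`
    (∀ u v : (∀ i, Matrix (Fin (d i)) (Fin (d i)) ℂ) ⊗[ℂ] H,
      u ∈ S → v ∈ S → (inner ℂ (T u) (T v) : ℂ) = ip v u) :=
  stmt10_general d σ τ hσ htr hττ lamH rhoH hHcomm μhalf μneghalf hμhalf hμneghalf S hS T hT ip
    hip_lin hip_add hip_pure
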